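/- arXiv:2412.08183 — 6 statements merged into one kernel-verified Lean document; each statement's English description precedes it below -/
import Mathlib

section
/- Let d ≥ 1, m > 0, and let g be a Schwartz function on ℝ^d (an element of SchwartzMap (EuclideanSpace ℝ (Fin d)) ℂ). Then the function x ↦ g(x) / (‖x‖² + m²) is again a Schwartz function on ℝ^d. -/
/-!
The multiplier `x ↦ (‖x‖² + m²)⁻¹` has temperate growth: it is the inverse function composed with
a temperate function bounded below by `m² > 0`, and on `[m², ∞)` all derivatives of `y ↦ y⁻¹` are
bounded, `|(d/dy)ⁿ y⁻¹| = n! / yⁿ⁺¹ ≤ n! / (m²)ⁿ⁺¹`. Multiplication by a function of temperate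
growth preserves Schwartz space.
-/

open Set Nat SchwartzMap

theorem norm_iteratedFDeriv_inv {𝕜 : Type*} [RCLike 𝕜] (n : ℕ) (x : 𝕜) :
    ‖iteratedFDeriv 𝕜 n Inv.inv x‖ = n ! / ‖x‖ ^ (n + 1) := by
  rw [norm_iteratedFDeriv_eq_norm_iteratedDeriv, iteratedDeriv_eq_iterate, iter_deriv_inv,
    norm_mul, norm_mul, norm_pow, norm_neg, norm_one, one_pow, one_mul, RCLike.norm_natCast,
    norm_zpow, show (-1 - n : ℤ) = -(n + 1 : ℕ) by push_cast; ring, zpow_neg, zpow_natCast,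
    div_eq_mul_inv]

theorem norm_iteratedFDerivWithin_inv_Ici_le {c y : ℝ} (hc : 0 < c) (hy : c ≤ y) (n : ℕ) :
    ‖iteratedFDerivWithin ℝ n Inv.inv (Ici c) y‖ ≤ n ! / c ^ (n + 1) := by
  rw [iteratedFDerivWithin_eq_iteratedFDeriv (uniqueDiffOn_Ici c)
      (contDiffAt_inv ℝ (hc.trans_le hy).ne') hy,
    norm_iteratedFDeriv_inv, Real.norm_of_nonneg (hc.le.trans hy)]
  gcongr

theorem Function.HasTemperateGrowth.inv {E : Type*} [NormedAddCommGroup E] [NormedSpace ℝ E]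
    {f : E → ℝ} (hf : f.HasTemperateGrowth) {c : ℝ} (hc : 0 < c) (hfc : ∀ x, c ≤ f x) :
    (fun x ↦ (f x)⁻¹).HasTemperateGrowth := by
  refine hf.comp' (g := Inv.inv) (t := Ici c) (range_subset_iff.2 hfc) (uniqueDiffOn_Ici c)
    ((contDiffOn_inv ℝ).mono fun y hy ↦ (hc.trans_le hy).ne') fun N ↦
    ⟨0, ∑ n ∈ Finset.range (N + 1), n ! / c ^ (n + 1), by positivity, fun n hn y hy ↦ ?_⟩
  rw [pow_zero, mul_one]
  exact (norm_iteratedFDerivWithin_inv_Ici_le hc hy n).trans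
    (Finset.single_le_sum (f := fun n ↦ (n ! : ℝ) / c ^ (n + 1)) (fun _ _ ↦ by positivity)
      (Finset.mem_range_succ_iff.2 hn))

theorem schwartz_div_norm_sq_add_mass_sq_general (d : ℕ) (m : ℝ) (hm : 0 < m)
    (g : SchwartzMap (EuclideanSpace ℝ (Fin d)) ℂ) :
    ∃ h : SchwartzMap (EuclideanSpace ℝ (Fin d)) ℂ,
      ∀ x, h x = g x / ((‖x‖ ^ 2 + m ^ 2 : ℝ) : ℂ) := by
  have hw : (fun x : EuclideanSpace ℝ (Fin d) ↦ (‖x‖ ^ 2 + m ^ 2)⁻¹).HasTemperateGrowth :=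
    ((Function.hasTemperateGrowth_norm_sq _).add (.const _)).inv (by positivity)
      fun x ↦ le_add_of_nonneg_left (sq_nonneg _)
  have hwc : (fun x : EuclideanSpace ℝ (Fin d) ↦
      (((‖x‖ ^ 2 + m ^ 2)⁻¹ : ℝ) : ℂ)).HasTemperateGrowth :=
    Function.Complex.hasTemperateGrowth_ofReal.comp hw
  refine ⟨smulLeftCLM ℂ (fun x ↦ (((‖x‖ ^ 2 + m ^ 2)⁻¹ : ℝ) : ℂ)) g, fun x ↦ ?_⟩
  rw [smulLeftCLM_apply_apply hwc, smul_eq_mul, Complex.ofReal_inv, div_eq_inv_mul]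

/-- For `m > 0`, dividing a Schwartz function on `ℝ^d` by `‖x‖² + m²` yields a Schwartz
function. -/
theorem schwartz_div_norm_sq_add_mass_sq (d : ℕ) (hd : 1 ≤ d) (m : ℝ) (hm : 0 < m)
    (g : SchwartzMap (EuclideanSpace ℝ (Fin d)) ℂ) :
    ∃ h : SchwartzMap (EuclideanSpace ℝ (Fin d)) ℂ,
      ∀ x, h x = g x / ((‖x‖ ^ 2 + m ^ 2 : ℝ) : ℂ) :=
  schwartz_div_norm_sq_add_mass_sq_general d m hm g
end

section
/- Let d ≥ 1 and m > 0. The linear map from the Schwartz space S(ℝ^d) (complex-valued Schwartz functions on ℝ^d) to itself sending f to the function x ↦ -Δf(x) + m²·f(x), where Δf(x) = ∑_{i=1}^d ∂²f/∂x_i²(x) is the Laplacian, is a bijection. -/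
/-!
Under the Fourier transform, `m² - Δ` becomes multiplication by the symbol `m² + (2π)²‖ξ‖²`.
For `m ≠ 0` this symbol is bounded below by `m² > 0`, so its reciprocal is again a smooth
function of temperate growth, and the Fourier multiplier with that reciprocal is a two-sided
inverse of `m² - Δ` on Schwartz space.
-/

open Real MeasureTheory

/-- The Laplacian of `g : ℝ^d → ℂ`: the sum of the second directional derivatives of `g`
along the standard basis vectors. -/
noncomputable def laplacian {d : ℕ} (g : EuclideanSpace ℝ (Fin d) → ℂ)
    (x : EuclideanSpace ℝ (Fin d)) : ℂ :=
  ∑ i : Fin d,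
    fderiv ℝ (fun y => fderiv ℝ g y (EuclideanSpace.single i 1)) x (EuclideanSpace.single i 1)

open scoped SchwartzMap Laplacian

namespace Function

theorem hasTemperateGrowth_inv_sq_add_mul_norm_sq {E : Type*} [NormedAddCommGroup E]
    [InnerProductSpace ℝ E] {m : ℝ} (hm : m ≠ 0) (a : ℝ) :
    (fun ξ : E ↦ (m ^ 2 + a ^ 2 * ‖ξ‖ ^ 2)⁻¹).HasTemperateGrowth := by
  have hscaled : (fun ξ : E ↦ (1 + ‖(a / m) • ξ‖ ^ 2) ^ (-1 : ℝ)).HasTemperateGrowth :=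
    (hasTemperateGrowth_one_add_norm_sq_rpow E (-1)).comp
      ((a / m) • ContinuousLinearMap.id ℝ E).hasTemperateGrowth
  have hfactor : (fun ξ : E ↦ (m ^ 2 + a ^ 2 * ‖ξ‖ ^ 2)⁻¹) =
      fun ξ ↦ (m ^ 2)⁻¹ * (1 + ‖(a / m) • ξ‖ ^ 2) ^ (-1 : ℝ) := by
    ext ξ
    rw [Real.rpow_neg_one, norm_smul, mul_pow, Real.norm_eq_abs, sq_abs, div_pow, ← mul_inv]
    field_simp
  exact hfactor ▸ (HasTemperateGrowth.const _).mul hscaled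

end Function

namespace SchwartzMap

variable {E F : Type*} [NormedAddCommGroup E] [InnerProductSpace ℝ E]
  [FiniteDimensional ℝ E] [MeasurableSpace E] [BorelSpace E]
  [NormedAddCommGroup F] [NormedSpace ℂ F]

section Multiplier

variable {𝕜 : Type*} [RCLike 𝕜] [NormedSpace 𝕜 F] [SMulCommClass ℂ 𝕜 F]

theorem fourierMultiplierCLM_add {g₁ g₂ : E → 𝕜} (hg₁ : g₁.HasTemperateGrowth)
    (hg₂ : g₂.HasTemperateGrowth) :
    fourierMultiplierCLM F (g₁ + g₂) = fourierMultiplierCLM F g₁ + fourierMultiplierCLM F g₂ := by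
  ext1 f
  simp [fourierMultiplierCLM_apply, smulLeftCLM_add hg₁ hg₂]

variable [CompleteSpace F]

theorem fourierMultiplierCLM_bijective {g : E → 𝕜} (hg : g.HasTemperateGrowth)
    (hg_inv : g⁻¹.HasTemperateGrowth) (hg_ne : ∀ ξ, g ξ ≠ 0) :
    Function.Bijective (fourierMultiplierCLM F g) := by
  have hinv_mul : g⁻¹ * g = fun _ ↦ 1 := funext fun ξ ↦ inv_mul_cancel₀ (hg_ne ξ)
  have hmul_inv : g * g⁻¹ = fun _ ↦ 1 := funext fun ξ ↦ mul_inv_cancel₀ (hg_ne ξ)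
  refine Function.bijective_iff_has_inverse.mpr ⟨fourierMultiplierCLM F g⁻¹, fun f ↦ ?_, fun f ↦ ?_⟩
  · simp [fourierMultiplierCLM_fourierMultiplierCLM_apply hg_inv hg, hinv_mul]
  · simp [fourierMultiplierCLM_fourierMultiplierCLM_apply hg hg_inv, hmul_inv]

end Multiplier

variable [CompleteSpace F]

theorem smul_sub_laplacian_eq_fourierMultiplierCLM (m : ℝ) (f : 𝓢(E, F)) :
    m ^ 2 • f - Δ f = fourierMultiplierCLM F (fun ξ : E ↦ m ^ 2 + (2 * π) ^ 2 * ‖ξ‖ ^ 2) f := by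
  have hnorm_sq : (fun ξ : E ↦ ‖ξ‖ ^ 2).HasTemperateGrowth := by fun_prop
  have hsymbol : (fun ξ : E ↦ m ^ 2 + (2 * π) ^ 2 * ‖ξ‖ ^ 2) =
      (fun _ ↦ m ^ 2) + (2 * π) ^ 2 • fun ξ ↦ ‖ξ‖ ^ 2 := rfl
  rw [laplacian_eq_fourierMultiplierCLM, hsymbol,
    fourierMultiplierCLM_add (.const _) (by fun_prop), fourierMultiplierCLM_const,
    fourierMultiplierCLM_smul hnorm_sq]
  simp [sub_eq_add_neg]

theorem bijective_smul_sub_laplacian {m : ℝ} (hm : m ≠ 0) :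
    Function.Bijective fun f : 𝓢(E, F) ↦ m ^ 2 • f - Δ f := by
  have hsymbol_pos : ∀ ξ : E, 0 < m ^ 2 + (2 * π) ^ 2 * ‖ξ‖ ^ 2 := fun ξ ↦ by positivity
  simp_rw [smul_sub_laplacian_eq_fourierMultiplierCLM]
  exact fourierMultiplierCLM_bijective (by fun_prop)
    (Function.hasTemperateGrowth_inv_sq_add_mul_norm_sq hm (2 * π)) fun ξ ↦ (hsymbol_pos ξ).ne'

end SchwartzMap

theorem laplacian_eq_coe_laplacian {d : ℕ} (f : 𝓢(EuclideanSpace ℝ (Fin d), ℂ)) :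
    laplacian f = Δ f := by
  ext x
  rw [SchwartzMap.laplacian_eq_sum (EuclideanSpace.basisFun (Fin d) ℝ), sum_apply]
  simp only [laplacian, EuclideanSpace.basisFun_apply]
  rfl

theorem massive_bv_bijective_on_schwartz_general (d : ℕ) (m : ℝ) (hm : 0 < m) :
    (∀ f₁ f₂ : SchwartzMap (EuclideanSpace ℝ (Fin d)) ℂ,
        (∀ x, -laplacian (⇑f₁) x + (m : ℂ) ^ 2 * f₁ x
            = -laplacian (⇑f₂) x + (m : ℂ) ^ 2 * f₂ x) → f₁ = f₂) ∧
    (∀ g : SchwartzMap (EuclideanSpace ℝ (Fin d)) ℂ,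
        ∃ f : SchwartzMap (EuclideanSpace ℝ (Fin d)) ℂ,
          ∀ x, -laplacian (⇑f) x + (m : ℂ) ^ 2 * f x = g x) := by
  have hbij := SchwartzMap.bijective_smul_sub_laplacian (E := EuclideanSpace ℝ (Fin d))
    (F := ℂ) hm.ne'
  have happly : ∀ (f : 𝓢(EuclideanSpace ℝ (Fin d), ℂ)) x,
      -laplacian f x + (m : ℂ) ^ 2 * f x = (m ^ 2 • f - Δ f) x := by
    intro f x
    simp only [laplacian_eq_coe_laplacian, sub_apply, smul_apply,
      Complex.real_smul, Complex.ofReal_pow]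
    ring
  refine ⟨fun f₁ f₂ h ↦ hbij.1 (SchwartzMap.ext fun x ↦ ?_), fun g ↦ ?_⟩
  · simpa only [happly] using h x
  · obtain ⟨f, hf⟩ := hbij.2 g
    exact ⟨f, fun x ↦ by rw [happly]; exact DFunLike.congr_fun hf x⟩

/-- For `m > 0`, the map `f ↦ -Δf + m²f` is a bijection of the Schwartz space `S(ℝ^d)` onto
itself: it is injective and surjective. -/
theorem massive_bv_bijective_on_schwartz (d : ℕ) (hd : 1 ≤ d) (m : ℝ) (hm : 0 < m) :
    (∀ f₁ f₂ : SchwartzMap (EuclideanSpace ℝ (Fin d)) ℂ,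
        (∀ x, -laplacian (⇑f₁) x + (m : ℂ) ^ 2 * f₁ x
            = -laplacian (⇑f₂) x + (m : ℂ) ^ 2 * f₂ x) → f₁ = f₂) ∧
    (∀ g : SchwartzMap (EuclideanSpace ℝ (Fin d)) ℂ,
        ∃ f : SchwartzMap (EuclideanSpace ℝ (Fin d)) ℂ,
          ∀ x, -laplacian (⇑f) x + (m : ℂ) ^ 2 * f x = g x) :=
  massive_bv_bijective_on_schwartz_general d m hm
end

section
/- Let f be a complex-valued Schwartz function on ℝ with f(0) = 0 and f'(0) = 0 (the derivative of f at 0 vanishes). Then there exists a Schwartz function h on ℝ such that f(k) = k²·h(k) for all k ∈ ℝ. -/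
/-!
Hadamard's lemma: if `f 0 = 0` then `f x = x • q x` with `q x = ∫₀¹ f'(t x) dt`. Differentiating
under the integral gives `q⁽ⁿ⁾ x = ∫₀¹ tⁿ f⁽ⁿ⁺¹⁾(t x) dt`, so `q` is smooth with bounded
derivatives, and integrating `d/dt (tⁿ⁺¹ f⁽ⁿ⁺¹⁾(t x))` over `[0, 1]` gives
`f⁽ⁿ⁺¹⁾ = x q⁽ⁿ⁺¹⁾ + (n + 1) q⁽ⁿ⁾`. Hence `x q⁽ⁿ⁾` decays rapidly by induction on `n`, and so does
`q⁽ⁿ⁾`. Thus a Schwartz function vanishing at `0` can be divided by `x`; a double zero is divided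
out in two steps, since `q 0 = f' 0`.
-/

open scoped Interval ContDiff SchwartzMap

theorem pow_mul_norm_le_norm_add_pow_mul_norm_smul {E : Type*} [NormedAddCommGroup E]
    [NormedSpace ℝ E] (k : ℕ) (x : ℝ) (v : E) :
    ‖x‖ ^ k * ‖v‖ ≤ ‖v‖ + ‖x‖ ^ k * ‖x • v‖ := by
  rw [norm_smul, ← mul_assoc, ← pow_succ]
  rcases le_total ‖x‖ 1 with hx | hx
  · have := mul_le_of_le_one_left (norm_nonneg v) (pow_le_one₀ (n := k) (norm_nonneg x) hx)
    have : 0 ≤ ‖x‖ ^ (k + 1) * ‖v‖ := by positivity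
    linarith
  · have := mul_le_mul_of_nonneg_right (pow_le_pow_right₀ hx (Nat.le_add_right k 1)) (norm_nonneg v)
    linarith [norm_nonneg v]

namespace SchwartzMap

variable {E : Type*} [NormedAddCommGroup E] [NormedSpace ℝ E]

@[fun_prop]
theorem continuous_iteratedDeriv (f : 𝓢(ℝ, E)) (n : ℕ) : Continuous (iteratedDeriv n f) :=
  f.smooth'.continuous_iteratedDeriv n (mod_cast le_top)

theorem hasDerivAt_iteratedDeriv (f : 𝓢(ℝ, E)) (n : ℕ) (x : ℝ) :
    HasDerivAt (iteratedDeriv n f) (iteratedDeriv (n + 1) f x) x := by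
  rw [iteratedDeriv_succ]
  exact (f.smooth'.differentiable_iteratedDeriv n (mod_cast ENat.natCast_lt_top n)).differentiableAt
    |>.hasDerivAt

theorem norm_iteratedDeriv_le_seminorm (f : 𝓢(ℝ, E)) (n : ℕ) (x : ℝ) :
    ‖iteratedDeriv n f x‖ ≤ SchwartzMap.seminorm ℝ 0 n f := by
  simpa using f.le_seminorm' ℝ 0 n x

noncomputable def hadamardQuotient (f : 𝓢(ℝ, E)) (n : ℕ) (x : ℝ) : E :=
  ∫ t in (0 : ℝ)..1, t ^ n • iteratedDeriv (n + 1) f (t * x)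

theorem norm_pow_smul_iteratedDeriv_le (f : 𝓢(ℝ, E)) (n m : ℕ) {t : ℝ} (ht : t ∈ Ι 0 1)
    (x : ℝ) : ‖t ^ n • iteratedDeriv m f x‖ ≤ SchwartzMap.seminorm ℝ 0 m f := by
  rw [Set.uIoc_of_le zero_le_one] at ht
  rw [norm_smul, norm_pow, Real.norm_of_nonneg ht.1.le]
  exact (mul_le_of_le_one_left (norm_nonneg _) (pow_le_one₀ ht.1.le ht.2)).trans
    (f.norm_iteratedDeriv_le_seminorm m x)

theorem norm_hadamardQuotient_le (f : 𝓢(ℝ, E)) (n : ℕ) (x : ℝ) :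
    ‖hadamardQuotient f n x‖ ≤ SchwartzMap.seminorm ℝ 0 (n + 1) f := by
  simpa [hadamardQuotient] using intervalIntegral.norm_integral_le_of_norm_le_const
    fun t ht => f.norm_pow_smul_iteratedDeriv_le n (n + 1) ht (t * x)

theorem hasDerivAt_hadamardQuotient (f : 𝓢(ℝ, E)) (n : ℕ) (x₀ : ℝ) :
    HasDerivAt (hadamardQuotient f n) (hadamardQuotient f (n + 1) x₀) x₀ := by
  have hderiv (t x : ℝ) : HasDerivAt (fun x => t ^ n • iteratedDeriv (n + 1) f (t * x))
      (t ^ (n + 1) • iteratedDeriv (n + 2) f (t * x)) x := by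
    refine (((f.hasDerivAt_iteratedDeriv (n + 1) (t * x)).scomp x
      ((hasDerivAt_id x).const_mul t)).const_smul (t ^ n)).congr_deriv ?_
    rw [mul_one, smul_smul, pow_succ]
  exact (intervalIntegral.hasDerivAt_integral_of_dominated_loc_of_deriv_le
    (bound := fun _ => SchwartzMap.seminorm ℝ 0 (n + 2) f) Filter.univ_mem
    (.of_forall fun x => (by fun_prop : Continuous _).aestronglyMeasurable)
    ((by fun_prop : Continuous _).intervalIntegrable 0 1)
    (by fun_prop : Continuous _).aestronglyMeasurable
    (.of_forall fun t ht x _ => f.norm_pow_smul_iteratedDeriv_le (n + 1) (n + 2) ht (t * x))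
    intervalIntegrable_const (.of_forall fun t _ x _ => hderiv t x)).2

theorem iteratedDeriv_hadamardQuotient (f : 𝓢(ℝ, E)) (n : ℕ) :
    iteratedDeriv n (hadamardQuotient f 0) = hadamardQuotient f n := by
  induction n with
  | zero => exact iteratedDeriv_zero
  | succ n ih =>
    rw [iteratedDeriv_succ, ih]
    exact funext fun x => (f.hasDerivAt_hadamardQuotient n x).deriv

theorem contDiff_hadamardQuotient (f : 𝓢(ℝ, E)) : ContDiff ℝ ∞ (hadamardQuotient f 0) :=
  contDiff_of_differentiable_iteratedDeriv fun n _ => by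
    rw [iteratedDeriv_hadamardQuotient]
    exact fun x => (f.hasDerivAt_hadamardQuotient n x).differentiableAt

theorem hasDerivAt_iteratedDeriv_comp_mul (f : 𝓢(ℝ, E)) (m : ℕ) (x t : ℝ) :
    HasDerivAt (fun t => iteratedDeriv m f (t * x)) (x • iteratedDeriv (m + 1) f (t * x)) t := by
  exact (f.hasDerivAt_iteratedDeriv m (t * x)).scomp t (hasDerivAt_mul_const x)

variable [CompleteSpace E]

theorem sub_apply_zero_eq_smul_hadamardQuotient (f : 𝓢(ℝ, E)) (x : ℝ) :
    f x - f 0 = x • hadamardQuotient f 0 x := by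
  have hftc := intervalIntegral.integral_eq_sub_of_hasDerivAt
    (fun t _ => f.hasDerivAt_iteratedDeriv_comp_mul 0 x t)
    ((by fun_prop : Continuous _).intervalIntegrable 0 1)
  simpa [hadamardQuotient, intervalIntegral.integral_smul] using hftc.symm

theorem iteratedDeriv_succ_eq_smul_hadamardQuotient (f : 𝓢(ℝ, E)) (n : ℕ) (x : ℝ) :
    iteratedDeriv (n + 1) f x =
      x • hadamardQuotient f (n + 1) x + (n + 1 : ℝ) • hadamardQuotient f n x := by
  have hderiv (t : ℝ) : HasDerivAt (fun t => t ^ (n + 1) • iteratedDeriv (n + 1) f (t * x))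
      (x • t ^ (n + 1) • iteratedDeriv (n + 2) f (t * x) +
        (n + 1 : ℝ) • t ^ n • iteratedDeriv (n + 1) f (t * x)) t := by
    refine ((hasDerivAt_pow (n + 1) t).smul
      (f.hasDerivAt_iteratedDeriv_comp_mul (n + 1) x t)).congr_deriv ?_
    rw [smul_comm _ x, add_tsub_cancel_right, Nat.cast_succ, mul_smul]
  have hftc := intervalIntegral.integral_eq_sub_of_hasDerivAt (fun t _ => hderiv t)
    ((by fun_prop : Continuous _).intervalIntegrable 0 1)
  rw [intervalIntegral.integral_add ((by fun_prop : Continuous _).intervalIntegrable 0 1)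
    ((by fun_prop : Continuous _).intervalIntegrable 0 1), intervalIntegral.integral_smul,
    intervalIntegral.integral_smul] at hftc
  simpa [hadamardQuotient] using hftc.symm

theorem hadamardQuotient_decay (f : 𝓢(ℝ, E)) (h0 : f 0 = 0) (k n : ℕ) :
    ∃ C, ∀ x, ‖x‖ ^ k * ‖hadamardQuotient f n x‖ ≤ C := by
  have hf (m : ℕ) (x : ℝ) : ‖x‖ ^ k * ‖iteratedDeriv m f x‖ ≤ SchwartzMap.seminorm ℝ k m f := by
    simpa using f.le_seminorm' ℝ k m x
  induction n with
  | zero =>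
    refine ⟨SchwartzMap.seminorm ℝ 0 1 f + SchwartzMap.seminorm ℝ k 0 f, fun x => ?_⟩
    have hx : x • hadamardQuotient f 0 x = iteratedDeriv 0 f x := by
      rw [iteratedDeriv_zero, ← sub_apply_zero_eq_smul_hadamardQuotient, h0, sub_zero]
    calc _ ≤ _ := pow_mul_norm_le_norm_add_pow_mul_norm_smul k x _
      _ ≤ _ := by rw [hx]; exact add_le_add (f.norm_hadamardQuotient_le 0 x) (hf 0 x)
  | succ n ih =>
    obtain ⟨C, hC⟩ := ih
    refine ⟨SchwartzMap.seminorm ℝ 0 (n + 2) f + (SchwartzMap.seminorm ℝ k (n + 1) f + (n + 1) * C),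
      fun x => ?_⟩
    have hx : x • hadamardQuotient f (n + 1) x =
        iteratedDeriv (n + 1) f x - (n + 1 : ℝ) • hadamardQuotient f n x := by
      rw [iteratedDeriv_succ_eq_smul_hadamardQuotient, add_sub_cancel_right]
    have hnorm : ‖x • hadamardQuotient f (n + 1) x‖ ≤
        ‖iteratedDeriv (n + 1) f x‖ + (n + 1) * ‖hadamardQuotient f n x‖ := by
      rw [hx]
      refine (norm_sub_le _ _).trans_eq ?_
      rw [norm_smul, Real.norm_of_nonneg (by positivity)]
    calc _ ≤ _ := pow_mul_norm_le_norm_add_pow_mul_norm_smul k x _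
      _ ≤ ‖hadamardQuotient f (n + 1) x‖ + (‖x‖ ^ k * ‖iteratedDeriv (n + 1) f x‖ +
            (n + 1) * (‖x‖ ^ k * ‖hadamardQuotient f n x‖)) := by
        gcongr
        exact (mul_le_mul_of_nonneg_left hnorm (by positivity)).trans_eq (by ring)
      _ ≤ _ := by gcongr; exacts [f.norm_hadamardQuotient_le _ x, hf _ x, hC x]

theorem exists_eq_smul_of_apply_zero_eq_zero (f : 𝓢(ℝ, E)) (h0 : f 0 = 0) :
    ∃ g : 𝓢(ℝ, E), ∀ x, f x = x • g x := by
  refine ⟨⟨hadamardQuotient f 0, f.contDiff_hadamardQuotient, fun k n => ?_⟩, fun x => ?_⟩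
  · simpa only [norm_iteratedFDeriv_eq_norm_iteratedDeriv, iteratedDeriv_hadamardQuotient]
      using f.hadamardQuotient_decay h0 k n
  · rw [← sub_zero (f x), ← h0]
    exact f.sub_apply_zero_eq_smul_hadamardQuotient x

end SchwartzMap

/-- A complex-valued Schwartz function on `ℝ` with a double zero at the origin can be divided
by `k²` within Schwartz space (Theorem 5.2 of the paper, controlling the IR divergence). -/
theorem schwartz_div_double_zero (f : SchwartzMap ℝ ℂ) (h0 : f 0 = 0)
    (h1 : deriv (⇑f) 0 = 0) :
    ∃ h : SchwartzMap ℝ ℂ, ∀ k : ℝ, f k = (k : ℂ) ^ 2 * h k := by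
  obtain ⟨g, hg⟩ := f.exists_eq_smul_of_apply_zero_eq_zero h0
  have hg0 : g 0 = 0 := by
    have hf : HasDerivAt (fun x : ℝ => x • g x) (g 0) 0 := by
      refine ((hasDerivAt_id (0 : ℝ)).smul (g.hasDerivAt 0)).congr_deriv ?_
      simp
    rw [← h1, funext hg, hf.deriv]
  obtain ⟨h, hh⟩ := g.exists_eq_smul_of_apply_zero_eq_zero hg0
  refine ⟨h, fun k => ?_⟩
  rw [hg, hh, Complex.real_smul, Complex.real_smul]
  ring
end

section
/- Let f be a complex-valued Schwartz function on ℝ. Then ∫_ℝ f(x) dx = 0 and ∫_ℝ x·f(x) dx = 0 if and only if there exists a Schwartz function h on ℝ with h''(x) = f(x) for all x ∈ ℝ (where h'' denotes the second derivative of h). -/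
/-!
The primitive `x ↦ ∫_{-∞}^x f` of a Schwartz function `f` is smooth and inherits the decay of `f`
at `-∞`; when `∫ f = 0` it equals `-∫_x^∞ f`, so it decays at `+∞` too and is again Schwartz.
Integration by parts gives `∫ x g'(x) dx = -∫ g` for Schwartz `g`, so if moreover the first
moment of `f` vanishes, its primitive has vanishing integral and has a Schwartz primitive itself.
Conversely, the derivative of a Schwartz function integrates to zero, and the same integration by
parts shows that both moments of a second derivative vanish.
-/

open Real MeasureTheory
open Set
open scoped SchwartzMap

section

variable {F : Type*} [NormedAddCommGroup F] [NormedSpace ℝ F]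

theorem norm_pow_mul_norm_setIntegral_le_integral {E : Type*} [NormedAddCommGroup E]
    [MeasurableSpace E] {μ : Measure E} {s : Set E} {f : E → F} {x : E} {k : ℕ}
    (hs : MeasurableSet s) (hk : Integrable (fun t ↦ ‖t‖ ^ k * ‖f t‖) μ) (hx : ∀ t ∈ s, ‖x‖ ≤ ‖t‖) :
    ‖x‖ ^ k * ‖∫ t in s, f t ∂μ‖ ≤ ∫ t, ‖t‖ ^ k * ‖f t‖ ∂μ := by
  calc ‖x‖ ^ k * ‖∫ t in s, f t ∂μ‖ = ‖∫ t in s, ‖x‖ ^ k • f t ∂μ‖ := by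
        rw [integral_smul, norm_smul, norm_pow, norm_norm]
    _ ≤ ∫ t in s, ‖t‖ ^ k * ‖f t‖ ∂μ := by
        refine norm_integral_le_of_norm_le hk.integrableOn (ae_restrict_of_forall_mem hs ?_)
        intro t ht
        rw [norm_smul, norm_pow, norm_norm]
        gcongr
        exact hx t ht
    _ ≤ ∫ t, ‖t‖ ^ k * ‖f t‖ ∂μ := setIntegral_le_integral hk (.of_forall fun t ↦ by positivity)

theorem hasDerivAt_integral_Iic [CompleteSpace F] {f : ℝ → F} (hc : Continuous f)
    (hi : Integrable f) (x : ℝ) : HasDerivAt (fun y ↦ ∫ t in Iic y, f t) (f x) x := by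
  have hsplit : (fun y ↦ ∫ t in Iic y, f t) =
      fun y ↦ (∫ t in Iic 0, f t) + ∫ t in (0 : ℝ)..y, f t := by
    ext y
    rw [← intervalIntegral.integral_Iic_sub_Iic hi.integrableOn hi.integrableOn, add_sub_cancel]
  rw [hsplit]
  exact (hc.integral_hasStrictDerivAt 0 x).hasDerivAt.const_add _

theorem integral_Iic_eq_neg_integral_Ioi {f : ℝ → F} (hi : Integrable f) (hf : ∫ t, f t = 0)
    (x : ℝ) : ∫ t in Iic x, f t = -∫ t in Ioi x, f t :=
  eq_neg_of_add_eq_zero_left <| by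
    rw [intervalIntegral.integral_Iic_add_Ioi hi.integrableOn hi.integrableOn, hf]

theorem deriv_integral_Iic [CompleteSpace F] {f : ℝ → F} (hc : Continuous f)
    (hi : Integrable f) : deriv (fun y ↦ ∫ t in Iic y, f t) = f :=
  funext fun x ↦ (hasDerivAt_integral_Iic hc hi x).deriv

namespace SchwartzMap

theorem integral_deriv_eq_zero (g : 𝓢(ℝ, F)) : ∫ x, deriv g x = 0 :=
  integral_eq_zero_of_hasDerivAt_of_integrable g.hasDerivAt (derivCLM ℝ F g).integrable
    g.integrable

theorem integrable_id_smul (g : 𝓢(ℝ, F)) : Integrable fun x : ℝ ↦ x • g x := by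
  have h := (smulLeftCLM F (fun x : ℝ ↦ x) g).integrable (μ := volume)
  rwa [smulLeftCLM_apply Function.HasTemperateGrowth.id'] at h

theorem integral_id_smul_deriv (g : 𝓢(ℝ, F)) : ∫ x : ℝ, x • deriv g x = -∫ x, g x := by
  simpa using integral_bilinear_hasDerivAt_right_eq_neg_left_of_integrable
    (L := ContinuousLinearMap.lsmul ℝ ℝ) (u := fun x : ℝ ↦ x) (u' := fun _ ↦ 1)
    (fun x _ ↦ hasDerivAt_id x) (fun x _ ↦ g.hasDerivAt x)
    (integrable_id_smul (derivCLM ℝ F g)) (by simpa using g.integrable) (integrable_id_smul g)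

theorem norm_pow_mul_norm_integral_Iic_le (f : 𝓢(ℝ, F)) (hf : ∫ t, f t = 0) (k : ℕ) (x : ℝ) :
    ‖x‖ ^ k * ‖∫ t in Iic x, f t‖ ≤ ∫ t, ‖t‖ ^ k * ‖f t‖ := by
  have hk := f.integrable_pow_mul volume k
  rcases le_or_gt x 0 with hx | hx
  · refine norm_pow_mul_norm_setIntegral_le_integral measurableSet_Iic hk fun t ht ↦ ?_
    rw [Real.norm_of_nonpos hx, Real.norm_of_nonpos (le_trans ht hx)]
    exact neg_le_neg ht
  · rw [integral_Iic_eq_neg_integral_Ioi f.integrable hf, norm_neg]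
    refine norm_pow_mul_norm_setIntegral_le_integral measurableSet_Ioi hk fun t ht ↦ ?_
    rw [Real.norm_of_nonneg hx.le, Real.norm_of_nonneg (hx.trans ht).le]
    exact le_of_lt ht

variable [CompleteSpace F]

noncomputable def primitive (f : 𝓢(ℝ, F)) (hf : ∫ t, f t = 0) : 𝓢(ℝ, F) where
  toFun x := ∫ t in Iic x, f t
  smooth' := contDiff_infty_iff_deriv.2
    ⟨fun x ↦ (hasDerivAt_integral_Iic f.continuous f.integrable x).differentiableAt,
      by rw [deriv_integral_Iic f.continuous f.integrable]; exact f.smooth'⟩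
  decay' k
    | 0 => ⟨_, fun x ↦ by
        simpa only [norm_iteratedFDeriv_zero] using norm_pow_mul_norm_integral_Iic_le f hf k x⟩
    | n + 1 => by
      obtain ⟨C, hC⟩ := f.decay' k n
      refine ⟨C, fun x ↦ ?_⟩
      rw [norm_iteratedFDeriv_eq_norm_iteratedDeriv, iteratedDeriv_succ',
        deriv_integral_Iic f.continuous f.integrable, ← norm_iteratedFDeriv_eq_norm_iteratedDeriv]
      exact hC x

theorem deriv_primitive (f : 𝓢(ℝ, F)) (hf : ∫ t, f t = 0) : deriv (primitive f hf) = f :=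
  deriv_integral_Iic f.continuous f.integrable

end SchwartzMap

end

/-- A complex-valued Schwartz function on `ℝ` has vanishing zeroth and first moments if and
only if it is the second derivative of a Schwartz function. -/
theorem schwartz_moments_iff_second_deriv (f : SchwartzMap ℝ ℂ) :
    ((∫ x : ℝ, f x) = 0 ∧ (∫ x : ℝ, (x : ℂ) * f x) = 0) ↔
      ∃ h : SchwartzMap ℝ ℂ, ∀ x : ℝ, deriv (deriv (⇑h)) x = f x := by
  simp_rw [← Complex.real_smul]
  constructor
  · rintro ⟨h0, h1⟩
    have hg : ∫ x, SchwartzMap.primitive f h0 x = 0 := by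
      rw [← neg_eq_zero, ← SchwartzMap.integral_id_smul_deriv, SchwartzMap.deriv_primitive, h1]
    refine ⟨SchwartzMap.primitive _ hg, fun x ↦ ?_⟩
    rw [SchwartzMap.deriv_primitive, SchwartzMap.deriv_primitive]
  · rintro ⟨h, hh⟩
    have hf : deriv (SchwartzMap.derivCLM ℝ ℂ h) = f := funext hh
    rw [← hf, SchwartzMap.integral_deriv_eq_zero, SchwartzMap.integral_id_smul_deriv]
    exact ⟨rfl, neg_eq_zero.2 (SchwartzMap.integral_deriv_eq_zero h)⟩
end

section
/- Let d ≥ 1 and let φ, ψ ∈ MvPolynomial (Fin d) ℂ be harmonic polynomials, i.e. ∑_{i} ∂²φ/∂x_i² = 0 and ∑_{i} ∂²ψ/∂x_i² = 0 (with ∂/∂x_i the formal partial derivative pderiv i). Then ∑_{α : Fin d →₀ ℕ} (∏_i (α i)!) · conj(coeff α φ) · (coeff α ψ) = (2π)^{-d/2} · ∫_{ℝ^d} conj(φ(x)) · ψ(x) · e^{-‖x‖²/2} dx, where φ(x) denotes the evaluation of φ at the (complexified) point x ∈ ℝ^d, and the sum on the left has only finitely many nonzero terms. -/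
/-!
If `ψ` is harmonic and homogeneous of degree `n`, Euler's identity `∑ i, X i * ∂ᵢψ = n • ψ` gives
`n ⟪φ, ψ⟫ = ∑ i, ⟪∂ᵢφ, ∂ᵢψ⟫` for both pairings: for the Fisher product because multiplication by
`X i` is adjoint to `∂ᵢ`, for the Gaussian one by Gaussian integration by parts
`∫ ∂ᵢp dγ = ∫ xᵢ p dγ`, where the extra term `⟪φ, Δψ⟫` vanishes. So the Hermitian form
`B = ⟪·,·⟫_γ - (2π)^(d/2) ⟪·,·⟫_F` satisfies `m B(φ, ψ) = n B(φ, ψ) = ∑ i, B(∂ᵢφ, ∂ᵢψ)` on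
homogeneous harmonic polynomials of degrees `m, n`; since `∂ᵢ` preserves harmonicity, induction
on `m + n` and `B(1, 1) = 0` make `B` vanish there, and harmonicity passes to homogeneous
components.
-/

open Real MeasureTheory MvPolynomial ComplexConjugate

theorem Finset.prod_apply_eq_mul_prod_erase {σ M : Type*} [Fintype σ] [DecidableEq σ]
    [CommMonoid M] (f : ℕ → M) {α β : σ →₀ ℕ} {i : σ} (h : ∀ j ≠ i, β j = α j) :
    ∏ j, f (β j) = f (β i) * ∏ j ∈ Finset.univ.erase i, f (α j) := by
  rw [← Finset.mul_prod_erase _ _ (Finset.mem_univ i)]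
  congr 1
  exact Finset.prod_congr rfl fun j hj => by rw [h j (Finset.ne_of_mem_erase hj)]

theorem integrable_pow_mul_exp_neg_sq_div_two (n : ℕ) :
    Integrable fun t : ℝ => t ^ n * rexp (-t ^ 2 / 2) := by
  convert integrable_rpow_mul_exp_neg_mul_sq (b := 1 / 2) (by norm_num)
    (s := n) (by linarith [(n.cast_nonneg : (0 : ℝ) ≤ n)]) using 2 with t
  rw [rpow_natCast]
  ring_nf

noncomputable def gaussianMoment (n : ℕ) : ℝ := ∫ t : ℝ, t ^ n * rexp (-t ^ 2 / 2)

theorem gaussianMoment_zero : gaussianMoment 0 = √(2 * π) := by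
  have h (t : ℝ) : t ^ 0 * rexp (-t ^ 2 / 2) = rexp (-(1 / 2) * t ^ 2) := by ring_nf
  simp only [gaussianMoment, h, integral_gaussian]
  ring_nf

-- `n - 1` is truncated: at `n = 0` this says that the first moment vanishes.
theorem gaussianMoment_succ (n : ℕ) : gaussianMoment (n + 1) = n * gaussianMoment (n - 1) := by
  have hderiv (t : ℝ) : HasDerivAt (fun t => t ^ n * rexp (-t ^ 2 / 2))
      (n * (t ^ (n - 1) * rexp (-t ^ 2 / 2)) - t ^ (n + 1) * rexp (-t ^ 2 / 2)) t := by
    have hexp : HasDerivAt (fun t : ℝ => rexp (-t ^ 2 / 2)) (rexp (-t ^ 2 / 2) * -t) t :=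
      ((hasDerivAt_pow 2 t).neg.div_const 2).exp.congr_deriv (by norm_num; ring)
    exact ((hasDerivAt_pow n t).mul hexp).congr_deriv (by ring)
  have hint := integrable_pow_mul_exp_neg_sq_div_two
  have := integral_eq_zero_of_hasDerivAt_of_integrable hderiv
    (((hint _).const_mul _).sub (hint _)) (hint n)
  rwa [integral_sub ((hint _).const_mul _) (hint _), integral_const_mul, sub_eq_zero,
    eq_comm] at this

namespace MvPolynomial

section Harmonic

variable {σ R : Type*} [CommSemiring R]

theorem pderiv_pderiv_comm (i j : σ) (p : MvPolynomial σ R) :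
    pderiv i (pderiv j p) = pderiv j (pderiv i p) := by
  classical
  induction p using MvPolynomial.induction_on with
  | C a => simp
  | add p q hp hq => simp [hp, hq]
  | mul_X p k ih =>
    simp only [Derivation.leibniz, pderiv_X, smul_eq_mul, map_add, ih, Pi.single_apply]
    split_ifs <;> simp <;> ring

theorem pderiv_homogeneousComponent (i : σ) (n : ℕ) (p : MvPolynomial σ R) :
    pderiv i (homogeneousComponent (n + 1) p) = homogeneousComponent n (pderiv i p) := by
  ext α
  simp only [coeff_pderiv, coeff_homogeneousComponent, map_add, Finsupp.degree_single]
  split_ifs <;> first | rfl | omega | simp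

variable [Fintype σ]

def IsHarmonic (p : MvPolynomial σ R) : Prop := ∑ i, pderiv i (pderiv i p) = 0

theorem IsHarmonic.pderiv {p : MvPolynomial σ R} (hp : IsHarmonic p) (i : σ) :
    IsHarmonic (pderiv i p) := by
  unfold IsHarmonic at *
  simp_rw [pderiv_pderiv_comm _ i, ← map_sum, hp, map_zero]

theorem IsHarmonic.homogeneousComponent {p : MvPolynomial σ R} (hp : IsHarmonic p) (n : ℕ) :
    IsHarmonic (homogeneousComponent n p) := by
  unfold IsHarmonic at *
  match n with
  | 0 => simp
  | 1 => simp [pderiv_homogeneousComponent]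
  | k + 2 => simp_rw [pderiv_homogeneousComponent, ← map_sum, hp, map_zero]

end Harmonic

variable {σ : Type*}

theorem conj_eval_ofReal (p : MvPolynomial σ ℂ) (x : σ → ℝ) :
    conj (eval (fun i => (x i : ℂ)) p) = eval (fun i => (x i : ℂ)) (map (starRingEnd ℂ) p) := by
  induction p using MvPolynomial.induction_on with
  | C a => simp
  | add p q hp hq => simp [hp, hq]
  | mul_X p i hp => simp [hp]

variable [Fintype σ]

section SesquilinearForm

variable (B : MvPolynomial σ ℂ →ₗ⋆[ℂ] MvPolynomial σ ℂ →ₗ[ℂ] ℂ)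
  (hB : ∀ φ ψ, conj (B φ ψ) = B ψ φ)
  (hX : ∀ φ ψ, IsHarmonic ψ → B φ (∑ i, X i * pderiv i ψ) = ∑ i, B (pderiv i φ) (pderiv i ψ))

include hX in
theorem natCast_mul_apply_of_isHomogeneous_right {φ ψ : MvPolynomial σ ℂ} {n : ℕ}
    (hψ : ψ.IsHomogeneous n) (hψ' : IsHarmonic ψ) :
    n * B φ ψ = ∑ i, B (pderiv i φ) (pderiv i ψ) := by
  rw [← hX φ ψ hψ', hψ.sum_X_mul_pderiv, map_nsmul, nsmul_eq_mul]

include hB hX in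
theorem natCast_mul_apply_of_isHomogeneous_left {φ ψ : MvPolynomial σ ℂ} {m : ℕ}
    (hφ : φ.IsHomogeneous m) (hφ' : IsHarmonic φ) :
    m * B φ ψ = ∑ i, B (pderiv i φ) (pderiv i ψ) := by
  have := congr_arg conj (natCast_mul_apply_of_isHomogeneous_right B hX (φ := ψ) hφ hφ')
  simpa only [map_mul, map_natCast, map_sum, hB] using this

include hB hX in
theorem apply_eq_zero_of_isHomogeneous (h1 : B 1 1 = 0) {φ ψ : MvPolynomial σ ℂ} {m n : ℕ}
    (hφ : φ.IsHomogeneous m) (hψ : ψ.IsHomogeneous n) (hφ' : IsHarmonic φ)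
    (hψ' : IsHarmonic ψ) : B φ ψ = 0 := by
  induction h : m + n using Nat.strong_induction_on generalizing m n φ ψ with
  | _ s ih =>
    by_cases hs : s = 0
    · obtain ⟨rfl, rfl⟩ : m = 0 ∧ n = 0 := by omega
      rw [← totalDegree_zero_iff_isHomogeneous, totalDegree_eq_zero_iff_eq_C] at hφ hψ
      rw [hφ, hψ, C_eq_smul_one, C_eq_smul_one (a := coeff 0 ψ)]
      simp [h1]
    have hpderiv : ∑ i, B (pderiv i φ) (pderiv i ψ) = 0 :=
      Finset.sum_eq_zero fun i _ =>
        ih _ (by omega) hφ.pderiv hψ.pderiv (hφ'.pderiv i) (hψ'.pderiv i) rfl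
    rcases Nat.eq_zero_or_pos n with rfl | hn
    · have := natCast_mul_apply_of_isHomogeneous_left B hB hX (ψ := ψ) hφ hφ'
      rw [hpderiv, mul_eq_zero] at this
      exact this.resolve_left (by exact_mod_cast (by omega : m ≠ 0))
    · have := natCast_mul_apply_of_isHomogeneous_right B hX (φ := φ) hψ hψ'
      rw [hpderiv, mul_eq_zero] at this
      exact this.resolve_left (by exact_mod_cast hn.ne')

include hB hX in
theorem apply_eq_zero_of_isHarmonic (h1 : B 1 1 = 0) {φ ψ : MvPolynomial σ ℂ}
    (hφ : IsHarmonic φ) (hψ : IsHarmonic ψ) : B φ ψ = 0 := by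
  rw [← sum_homogeneousComponent φ, ← sum_homogeneousComponent ψ]
  simp only [map_sum, LinearMap.sum_apply]
  refine Finset.sum_eq_zero fun j _ => Finset.sum_eq_zero fun k _ => ?_
  exact apply_eq_zero_of_isHomogeneous B hB hX h1
    (homogeneousComponent_isHomogeneous _ φ) (homogeneousComponent_isHomogeneous _ ψ)
    (hφ.homogeneousComponent _) (hψ.homogeneousComponent _)

end SesquilinearForm

section Fisher

theorem finite_support_fisher_summand (φ ψ : MvPolynomial σ ℂ) :
    (Function.support fun α : σ →₀ ℕ =>
      ((∏ i, Nat.factorial (α i) : ℕ) : ℂ) * conj (coeff α φ) * coeff α ψ).Finite :=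
  ψ.support.finite_toSet.subset fun α hα => by
    simp only [Function.mem_support, ne_eq, mul_eq_zero, not_or] at hα
    exact mem_support_iff.2 hα.2

noncomputable def fisherInner : MvPolynomial σ ℂ →ₗ⋆[ℂ] MvPolynomial σ ℂ →ₗ[ℂ] ℂ :=
  LinearMap.mk₂'ₛₗ (starRingEnd ℂ) (RingHom.id ℂ)
    (fun φ ψ => ∑ᶠ α : σ →₀ ℕ, ((∏ i, Nat.factorial (α i) : ℕ) : ℂ) * conj (coeff α φ) * coeff α ψ)
    (fun φ₁ φ₂ ψ => by
      rw [← finsum_add_distrib (finite_support_fisher_summand _ _)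
        (finite_support_fisher_summand _ _)]
      simp only [coeff_add, map_add, mul_add, add_mul])
    (fun c φ ψ => by
      rw [smul_eq_mul, mul_finsum]
      simp only [coeff_smul, smul_eq_mul, map_mul]
      congr! 2 with α
      ring)
    (fun φ ψ₁ ψ₂ => by
      rw [← finsum_add_distrib (finite_support_fisher_summand _ _)
        (finite_support_fisher_summand _ _)]
      simp only [coeff_add, mul_add])
    (fun c φ ψ => by
      rw [smul_eq_mul, mul_finsum]
      simp only [coeff_smul, smul_eq_mul, RingHom.id_apply]
      congr! 2 with α
      ring)

theorem fisherInner_apply (φ ψ : MvPolynomial σ ℂ) :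
    fisherInner φ ψ =
      ∑ᶠ α : σ →₀ ℕ, ((∏ i, Nat.factorial (α i) : ℕ) : ℂ) * conj (coeff α φ) * coeff α ψ :=
  rfl

theorem conj_fisherInner (φ ψ : MvPolynomial σ ℂ) : conj (fisherInner φ ψ) = fisherInner ψ φ := by
  rw [fisherInner_apply, map_finsum _ (finite_support_fisher_summand φ ψ)]
  simp only [map_mul, map_natCast, Complex.conj_conj, fisherInner_apply]
  congr! 2 with α
  ring

theorem fisherInner_one_one : fisherInner (1 : MvPolynomial σ ℂ) 1 = 1 := by
  classical
  rw [fisherInner_apply, finsum_eq_single _ 0 fun α hα => by rw [coeff_one, if_neg hα.symm]; simp]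
  simp

theorem prod_factorial_add_single [DecidableEq σ] (α : σ →₀ ℕ) (i : σ) :
    ((∏ j, Nat.factorial ((α + Finsupp.single i 1 : σ →₀ ℕ) j) : ℕ) : ℂ) =
      (α i + 1) * ((∏ j, Nat.factorial (α j) : ℕ) : ℂ) := by
  rw [Finset.prod_apply_eq_mul_prod_erase Nat.factorial (α := α) (i := i)
      fun j hj => by simp [hj.symm],
    Finset.prod_apply_eq_mul_prod_erase Nat.factorial (α := α) (i := i) fun _ _ => rfl]
  simp [Nat.factorial_succ]
  ring

theorem fisherInner_pderiv_left (i : σ) (φ ψ : MvPolynomial σ ℂ) :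
    fisherInner (pderiv i φ) ψ = fisherInner φ (X i * ψ) := by
  classical
  have hinj : Function.Injective fun β : σ →₀ ℕ => β + Finsupp.single i 1 := add_left_injective _
  rw [fisherInner_apply, fisherInner_apply, eq_comm, ← finsum_mem_univ,
    finsum_mem_inter_support_eq' _ _ (Set.range fun β : σ →₀ ℕ => β + Finsupp.single i 1),
    finsum_mem_range hinj]
  · refine finsum_congr fun β => ?_
    rw [coeff_pderiv, prod_factorial_add_single, mul_comm (X i), coeff_mul_X]
    simp only [map_mul, map_add, map_one, map_natCast]
    ring
  · -- a nonzero summand has `coeff α (X i * ψ) ≠ 0`, hence `α i ≠ 0`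
    intro α hα
    have hX : coeff α (X i * ψ) ≠ 0 := right_ne_zero_of_mul hα
    rw [coeff_X_mul'] at hX
    have hi : i ∈ α.support := by
      by_contra h
      simp [h] at hX
    exact iff_of_true trivial ⟨α - Finsupp.single i 1, tsub_add_cancel_of_le
      (Finsupp.single_le_iff.2 (Nat.one_le_iff_ne_zero.2 (Finsupp.mem_support_iff.1 hi)))⟩

theorem fisherInner_sum_X_mul_pderiv (φ ψ : MvPolynomial σ ℂ) :
    fisherInner φ (∑ i, X i * pderiv i ψ) = ∑ i, fisherInner (pderiv i φ) (pderiv i ψ) := by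
  simp only [map_sum, fisherInner_pderiv_left]

end Fisher

section Gaussian

theorem eval_monomial_mul_gaussian (α : σ →₀ ℕ) (c : ℂ) (x : σ → ℝ) :
    eval (fun i => (x i : ℂ)) (monomial α c) * ((∏ i, rexp (-x i ^ 2 / 2) : ℝ) : ℂ) =
      c * ∏ i, ((x i ^ α i * rexp (-x i ^ 2 / 2) : ℝ) : ℂ) := by
  rw [eval_monomial, Finsupp.prod_pow]
  push_cast
  rw [Finset.prod_mul_distrib]
  ring

theorem integrable_eval_mul_gaussian (p : MvPolynomial σ ℂ) :
    Integrable fun x : σ → ℝ =>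
      eval (fun i => (x i : ℂ)) p * ((∏ i, rexp (-x i ^ 2 / 2) : ℝ) : ℂ) := by
  induction p using MvPolynomial.induction_on' with
  | monomial α c =>
    simp_rw [eval_monomial_mul_gaussian]
    exact (Integrable.fintype_prod fun i =>
      (integrable_pow_mul_exp_neg_sq_div_two (α i)).ofReal).const_mul c
  | add p q hp hq =>
    simp only [map_add, add_mul]
    exact hp.add hq

noncomputable def gaussianIntegral : MvPolynomial σ ℂ →ₗ[ℂ] ℂ where
  toFun p := ∫ x : σ → ℝ, eval (fun i => (x i : ℂ)) p * ((∏ i, rexp (-x i ^ 2 / 2) : ℝ) : ℂ)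
  map_add' p q := by
    simp only [map_add, add_mul]
    exact integral_add (integrable_eval_mul_gaussian p) (integrable_eval_mul_gaussian q)
  map_smul' c p := by
    simp only [smul_eval, mul_assoc, integral_const_mul, RingHom.id_apply, smul_eq_mul]

theorem gaussianIntegral_apply (p : MvPolynomial σ ℂ) :
    gaussianIntegral p =
      ∫ x : σ → ℝ, eval (fun i => (x i : ℂ)) p * ((∏ i, rexp (-x i ^ 2 / 2) : ℝ) : ℂ) :=
  rfl

theorem gaussianIntegral_monomial (α : σ →₀ ℕ) (c : ℂ) :
    gaussianIntegral (monomial α c) = c * ∏ i, (gaussianMoment (α i) : ℂ) := by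
  simp only [gaussianIntegral_apply, eval_monomial_mul_gaussian, integral_const_mul,
    integral_fintype_prod_volume_eq_prod
      (fun i (t : ℝ) => ((t ^ α i * rexp (-t ^ 2 / 2) : ℝ) : ℂ)), integral_complex_ofReal,
    gaussianMoment]

theorem gaussianIntegral_one :
    gaussianIntegral (1 : MvPolynomial σ ℂ) = (√(2 * π) : ℂ) ^ Fintype.card σ := by
  rw [← C_1, C_apply, gaussianIntegral_monomial]
  simp [gaussianMoment_zero]

theorem gaussianIntegral_pderiv (i : σ) (p : MvPolynomial σ ℂ) :
    gaussianIntegral (pderiv i p) = gaussianIntegral (X i * p) := by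
  classical
  induction p using MvPolynomial.induction_on' with
  | monomial α c =>
    rw [pderiv_monomial, X, monomial_mul, one_mul, gaussianIntegral_monomial,
      gaussianIntegral_monomial,
      Finset.prod_apply_eq_mul_prod_erase (fun n => (gaussianMoment n : ℂ)) (α := α) (i := i)
        fun j hj => by simp [hj.symm],
      Finset.prod_apply_eq_mul_prod_erase (fun n => (gaussianMoment n : ℂ)) (α := α) (i := i)
        fun j hj => by simp [hj.symm]]
    simp only [Finsupp.coe_tsub, Finsupp.coe_add, Pi.sub_apply, Pi.add_apply,
      Finsupp.single_eq_same]
    rw [add_comm 1, gaussianMoment_succ]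
    push_cast
    ring
  | add p q hp hq => simp only [map_add, mul_add, hp, hq]

theorem conj_gaussianIntegral (p : MvPolynomial σ ℂ) :
    conj (gaussianIntegral p) = gaussianIntegral (map (starRingEnd ℂ) p) := by
  simp only [gaussianIntegral_apply, ← integral_conj, map_mul, conj_eval_ofReal,
    Complex.conj_ofReal]

noncomputable def gaussianInner : MvPolynomial σ ℂ →ₗ⋆[ℂ] MvPolynomial σ ℂ →ₗ[ℂ] ℂ :=
  LinearMap.mk₂'ₛₗ (starRingEnd ℂ) (RingHom.id ℂ)
    (fun φ ψ => gaussianIntegral (map (starRingEnd ℂ) φ * ψ))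
    (fun φ₁ φ₂ ψ => by simp only [map_add, add_mul])
    (fun c φ ψ => by
      rw [smul_eq_C_mul, (map _).map_mul, map_C, mul_assoc, ← smul_eq_C_mul, map_smul,
        smul_eq_mul])
    (fun φ ψ₁ ψ₂ => by simp only [mul_add, map_add])
    (fun c φ ψ => by simp only [mul_smul_comm, map_smul, RingHom.id_apply])

theorem gaussianInner_apply (φ ψ : MvPolynomial σ ℂ) :
    gaussianInner φ ψ = gaussianIntegral (map (starRingEnd ℂ) φ * ψ) :=
  rfl

theorem conj_gaussianInner (φ ψ : MvPolynomial σ ℂ) :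
    conj (gaussianInner φ ψ) = gaussianInner ψ φ := by
  rw [gaussianInner_apply, gaussianInner_apply, conj_gaussianIntegral, map_mul, map_map,
    mul_comm]
  simp [map_id]

theorem gaussianInner_X_mul_right (i : σ) (φ ψ : MvPolynomial σ ℂ) :
    gaussianInner φ (X i * ψ) = gaussianInner (pderiv i φ) ψ + gaussianInner φ (pderiv i ψ) := by
  rw [gaussianInner_apply, gaussianInner_apply, gaussianInner_apply, ← map_add, ← pderiv_map,
    ← pderiv_mul, gaussianIntegral_pderiv, mul_left_comm]

theorem gaussianInner_sum_X_mul_pderiv (φ : MvPolynomial σ ℂ) {ψ : MvPolynomial σ ℂ}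
    (hψ : IsHarmonic ψ) :
    gaussianInner φ (∑ i, X i * pderiv i ψ) = ∑ i, gaussianInner (pderiv i φ) (pderiv i ψ) := by
  rw [map_sum]
  simp only [gaussianInner_X_mul_right, Finset.sum_add_distrib]
  rw [← map_sum, (hψ : ∑ i, pderiv i (pderiv i ψ) = 0), map_zero, add_zero]

end Gaussian

theorem gaussianInner_eq_fisherInner {φ ψ : MvPolynomial σ ℂ} (hφ : IsHarmonic φ)
    (hψ : IsHarmonic ψ) :
    gaussianInner φ ψ = (√(2 * π) : ℂ) ^ Fintype.card σ * fisherInner φ ψ := by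
  set c : ℂ := (√(2 * π) : ℂ) ^ Fintype.card σ
  have hc : conj c = c := by simp [c, Complex.conj_ofReal]
  have := apply_eq_zero_of_isHarmonic (gaussianInner - c • fisherInner)
    (fun φ ψ => by simp [conj_gaussianInner, conj_fisherInner, hc])
    (fun φ ψ hψ => by
      simp only [LinearMap.sub_apply, LinearMap.smul_apply, gaussianInner_sum_X_mul_pderiv _ hψ,
        fisherInner_sum_X_mul_pderiv, Finset.smul_sum, Finset.sum_sub_distrib])
    (by simp [gaussianInner_apply, gaussianIntegral_one, fisherInner_one_one, c]) hφ hψ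
  simpa [sub_eq_zero] using this

theorem integral_euclideanSpace_eq_gaussianInner (φ ψ : MvPolynomial σ ℂ) :
    ∫ x : EuclideanSpace ℝ σ, conj (eval (fun i => (x i : ℂ)) φ) * eval (fun i => (x i : ℂ)) ψ *
      Complex.exp ((-(‖x‖ ^ 2) / 2 : ℝ) : ℂ) = gaussianInner φ ψ := by
  rw [← (EuclideanSpace.volume_preserving_symm_measurableEquiv_toLp σ).symm.integral_comp',
    gaussianInner_apply, gaussianIntegral_apply]
  congr 1 with x
  have hw : -‖(MeasurableEquiv.toLp 2 (σ → ℝ)).symm.symm x‖ ^ 2 / 2 = ∑ i, -x i ^ 2 / 2 := by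
    simp [EuclideanSpace.real_norm_sq_eq, Finset.sum_div, neg_div]
  rw [hw, ← Real.exp_sum, Complex.ofReal_exp, map_mul, conj_eval_ofReal]
  rfl

end MvPolynomial

theorem fisher_eq_gaussian_inner_of_harmonic_general (d : ℕ)
    (φ ψ : MvPolynomial (Fin d) ℂ)
    (hφ : ∑ i : Fin d, pderiv i (pderiv i φ) = 0)
    (hψ : ∑ i : Fin d, pderiv i (pderiv i ψ) = 0) :
    (Function.support fun α : Fin d →₀ ℕ =>
        ((∏ i : Fin d, Nat.factorial (α i) : ℕ) : ℂ) *
          (starRingEnd ℂ) (coeff α φ) * coeff α ψ).Finite ∧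
    ∑ᶠ α : Fin d →₀ ℕ,
        ((∏ i : Fin d, Nat.factorial (α i) : ℕ) : ℂ) *
          (starRingEnd ℂ) (coeff α φ) * coeff α ψ =
      (((2 * π) ^ (-(d : ℝ) / 2) : ℝ) : ℂ) *
        ∫ x : EuclideanSpace ℝ (Fin d),
          (starRingEnd ℂ) (eval (fun i => (x i : ℂ)) φ) *
            eval (fun i => (x i : ℂ)) ψ *
            Complex.exp ((-(‖x‖ ^ 2) / 2 : ℝ) : ℂ) := by
  have hnorm : (((2 * π) ^ (-(d : ℝ) / 2) : ℝ) : ℂ) * (√(2 * π) : ℂ) ^ d = 1 := by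
    rw [← Complex.ofReal_pow, ← Complex.ofReal_mul, sqrt_eq_rpow, ← rpow_natCast,
      ← rpow_mul (by positivity), ← rpow_add (by positivity),
      show -(d : ℝ) / 2 + 1 / 2 * d = 0 by ring, rpow_zero, Complex.ofReal_one]
  refine ⟨finite_support_fisher_summand φ ψ, ?_⟩
  rw [integral_euclideanSpace_eq_gaussianInner, gaussianInner_eq_fisherInner hφ hψ,
    Fintype.card_fin, ← mul_assoc, hnorm, one_mul, fisherInner_apply]

/-- The Fisher inner product of two harmonic polynomials on `ℝ^d` equals their
Gaussian-weighted `L²` inner product, up to the normalization `(2π)^{d/2}`; moreover the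
defining sum of the Fisher inner product has finitely many nonzero terms. -/
theorem fisher_eq_gaussian_inner_of_harmonic (d : ℕ) (hd : 1 ≤ d)
    (φ ψ : MvPolynomial (Fin d) ℂ)
    (hφ : ∑ i : Fin d, pderiv i (pderiv i φ) = 0)
    (hψ : ∑ i : Fin d, pderiv i (pderiv i ψ) = 0) :
    (Function.support fun α : Fin d →₀ ℕ =>
        ((∏ i : Fin d, Nat.factorial (α i) : ℕ) : ℂ) *
          (starRingEnd ℂ) (coeff α φ) * coeff α ψ).Finite ∧
    ∑ᶠ α : Fin d →₀ ℕ,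
        ((∏ i : Fin d, Nat.factorial (α i) : ℕ) : ℂ) *
          (starRingEnd ℂ) (coeff α φ) * coeff α ψ =
      (((2 * π) ^ (-(d : ℝ) / 2) : ℝ) : ℂ) *
        ∫ x : EuclideanSpace ℝ (Fin d),
          (starRingEnd ℂ) (eval (fun i => (x i : ℂ)) φ) *
            eval (fun i => (x i : ℂ)) ψ *
            Complex.exp ((-(‖x‖ ^ 2) / 2 : ℝ) : ℂ) :=
  fisher_eq_gaussian_inner_of_harmonic_general d φ ψ hφ hψ
end

section
/- Let d ≥ 3 and k ∈ ℕ. Let H_k be the ℂ-subspace of MvPolynomial (Fin d) ℂ consisting of polynomials p that are homogeneous of degree k and harmonic (∑_i pderiv i (pderiv i p) = 0). Then H_k is finite-dimensional and its dimension satisfies (dim_ℂ H_k) · ((d-2)! · k!) = (d + 2k - 2) · (d + k - 3)!. -/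
/-!
The Laplacian maps homogeneous polynomials of degree `k + 2` onto those of degree `k`: for a
fixed variable `x₀`, `Δ (x^(α + 2e₀))` is a nonzero multiple of `x^α` plus monomials
`x^(α + 2e₀ - 2eᵢ)` carrying a higher power of `x₀`, so every monomial is reached by induction
on its degree in the remaining variables. Rank–nullity then gives
`dim ℋ_{k+2} = C(d+k+1, k+2) - C(d+k-1, k)`, while for `k < 2` every homogeneous polynomial is
harmonic; the closed formula is a factorial computation.
-/

open Finset Finsupp Module Nat

theorem Finsupp.add_le_degree_of_ne {σ M : Type*} [AddCommMonoid M] [PartialOrder M]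
    [CanonicallyOrderedAdd M] {i j : σ} (h : i ≠ j) (f : σ →₀ M) :
    f i + f j ≤ f.degree := by
  classical
  calc f i + f j = ∑ x ∈ {i, j}, f x := (sum_pair h).symm
    _ ≤ ∑ x ∈ f.support ∪ {i, j}, f x := sum_le_sum_of_subset subset_union_right
    _ = f.degree := (sum_subset subset_union_left fun x _ hx => notMem_support_iff.1 hx).symm

theorem Nat.mul_factorial_mul_factorial_of_add_choose_eq {D K X : ℕ}
    (hX : X + (D + K + 1).choose K = (D + K + 3).choose (K + 2)) :
    X * (D ! * (K + 2)!) = (D + 2 * K + 4) * (D + K + 1)! := by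
  have h₁ := Nat.add_choose_mul_factorial_mul_factorial (D + 1) K
  have h₂ := Nat.add_choose_mul_factorial_mul_factorial (D + 1) (K + 2)
  rw [show D + 1 + K = D + K + 1 by omega] at h₁
  rw [show D + 1 + (K + 2) = D + K + 1 + 2 by omega] at h₂
  simp only [Nat.factorial_succ] at h₁ h₂ ⊢
  refine Nat.eq_of_mul_eq_mul_left (Nat.succ_pos D) ?_
  zify at *
  linear_combination
    ((D + 1) * D ! * (K + 2) * (K + 1) * K ! : ℤ) * hX + h₂ - (K + 2) * (K + 1) * h₁

namespace MvPolynomial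

section Homogeneous

variable {σ : Type*} [Fintype σ]

theorem finrank_homogeneousSubmodule {R : Type*} [CommRing R] [StrongRankCondition R] (n : ℕ) :
    finrank R (homogeneousSubmodule σ R n) = (Fintype.card σ + n - 1).choose n := by
  classical
  have hdeg : {s : σ →₀ ℕ | s.degree = n} = (univ.finsuppAntidiag n : Finset (σ →₀ ℕ)) := by
    ext s
    simp [degree_eq_sum]
  rw [homogeneousSubmodule_eq_finsupp_supported, hdeg,
    (AddMonoidAlgebra.supportedEquivFinsupp _).finrank_eq, finrank_finsupp_self]
  simp [card_finsuppAntidiag_nat_eq_choose]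

instance {K : Type*} [Field K] (n : ℕ) : FiniteDimensional K (homogeneousSubmodule σ K n) :=
  Module.Finite.iff_fg.2 (homogeneousSubmodule_fg σ K n)

end Homogeneous

section Laplacian

variable (σ R : Type*) [Fintype σ] [CommSemiring R]

noncomputable def laplacian : MvPolynomial σ R →ₗ[R] MvPolynomial σ R :=
  ∑ i, (pderiv i).toLinearMap ∘ₗ (pderiv i).toLinearMap

noncomputable def harmonicSubmodule (n : ℕ) : Submodule R (MvPolynomial σ R) :=
  homogeneousSubmodule σ R n ⊓ LinearMap.ker (laplacian σ R)

variable {σ R}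

theorem laplacian_apply (p : MvPolynomial σ R) :
    laplacian σ R p = ∑ i, pderiv i (pderiv i p) := by
  simp [laplacian, LinearMap.sum_apply]

theorem laplacian_monomial (s : σ →₀ ℕ) (c : R) :
    laplacian σ R (monomial s c) =
      ∑ i, monomial (s - single i 2) (c * (s i).descFactorial 2) := by
  rw [laplacian_apply]
  refine sum_congr rfl fun i _ => ?_
  rw [pderiv_monomial, pderiv_monomial, tsub_tsub, ← single_add, one_add_one_eq_two, tsub_apply,
    single_eq_same, mul_assoc, ← Nat.cast_mul, Nat.descFactorial_succ, Nat.descFactorial_one,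
    mul_comm (s i - 1)]

theorem IsHomogeneous.laplacian {p : MvPolynomial σ R} {n : ℕ} (h : p.IsHomogeneous n) :
    (laplacian σ R p).IsHomogeneous (n - 2) := by
  rw [laplacian_apply]
  exact IsHomogeneous.sum _ _ _ fun i _ => by
    simpa [Nat.sub_sub] using (h.pderiv (i := i)).pderiv (i := i)

theorem laplacian_eq_zero_of_isHomogeneous {p : MvPolynomial σ R} {n : ℕ} (h : p.IsHomogeneous n)
    (hn : n < 2) : laplacian σ R p = 0 := by
  rw [p.as_sum, map_sum]
  refine sum_eq_zero fun s hs => ?_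
  have hs : s.degree = n := (h.degree_eq_sum_deg_support hs).symm
  rw [laplacian_monomial]
  refine sum_eq_zero fun i _ => ?_
  have : s i < 2 := by have := le_degree i s; omega
  rw [Nat.descFactorial_eq_zero_iff_lt.2 this, Nat.cast_zero, mul_zero, monomial_zero]

theorem harmonicSubmodule_eq_of_lt_two {n : ℕ} (hn : n < 2) :
    harmonicSubmodule σ R n = homogeneousSubmodule σ R n :=
  inf_eq_left.2 fun _ hp => laplacian_eq_zero_of_isHomogeneous hp hn

end Laplacian

section Field

variable {σ K : Type*} [Fintype σ] [Field K]

instance (n : ℕ) : FiniteDimensional K (harmonicSubmodule σ K n) :=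
  Submodule.finiteDimensional_inf_left _ _

variable [CharZero K]

theorem monomial_mem_map_laplacian (i₀ : σ) {n : ℕ} {s : σ →₀ ℕ} (hs : s.degree = n) (a : K) :
    monomial s a ∈ (homogeneousSubmodule σ K (n + 2)).map (laplacian σ K) := by
  classical
  set S := (homogeneousSubmodule σ K (n + 2)).map (laplacian σ K)
  induction hm : s.degree - s i₀ using Nat.strong_induction_on generalizing s a with
  | _ m ih =>
  set t := s + single i₀ 2
  have ht : t.degree = n + 2 := by simp [t, hs]
  have hc : ((t i₀).descFactorial 2 : K) ≠ 0 := by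
    rw [Nat.cast_ne_zero, Ne, Nat.descFactorial_eq_zero_iff_lt]
    simp [t]
  have hlap : laplacian σ K (monomial t (a / (t i₀).descFactorial 2)) = monomial s a +
      ∑ i ∈ univ.erase i₀,
        monomial (t - single i 2) (a / (t i₀).descFactorial 2 * (t i).descFactorial 2) := by
    rw [laplacian_monomial, ← Finset.add_sum_erase _ _ (mem_univ i₀), div_mul_cancel₀ _ hc,
      add_tsub_cancel_right]
  have hterm : ∀ i ∈ univ.erase i₀,
      monomial (t - single i 2) (a / (t i₀).descFactorial 2 * (t i).descFactorial 2) ∈ S := by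
    intro i hi
    have hne := ne_of_mem_erase hi
    have hti : t i = s i := by simp [t, hne.symm]
    by_cases h2 : 2 ≤ s i
    · have hu : (t - single i 2).degree = n := by
        have := congrArg degree (tsub_add_cancel_of_le (single_le_iff.2 (hti ▸ h2)))
        rw [map_add, degree_single, ht] at this
        omega
      have hui₀ : (t - single i 2 : σ →₀ ℕ) i₀ = s i₀ + 2 := by simp [t, hne]
      -- `s i ≥ 2` forces `m ≥ 2`, and passing from `s` to `t - single i 2` lowers `m` by two
      have hpair := add_le_degree_of_ne hne s
      exact ih (m - 2) (by omega) hu _ (by omega)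
    · rw [Nat.descFactorial_eq_zero_iff_lt.2 (show t i < 2 by omega), Nat.cast_zero, mul_zero,
        monomial_zero]
      exact S.zero_mem
  rw [← add_sub_cancel_right (monomial s a) (∑ i ∈ univ.erase i₀, _), ← hlap]
  exact S.sub_mem ⟨_, isHomogeneous_monomial _ ht, rfl⟩ (S.sum_mem hterm)

theorem map_laplacian_homogeneousSubmodule [Nonempty σ] (n : ℕ) :
    (homogeneousSubmodule σ K (n + 2)).map (laplacian σ K) = homogeneousSubmodule σ K n := by
  refine le_antisymm (Submodule.map_le_iff_le_comap.2 fun p hp => hp.laplacian) fun q hq => ?_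
  rw [q.as_sum]
  exact Submodule.sum_mem _ fun s hs =>
    monomial_mem_map_laplacian (Classical.arbitrary σ) (hq.degree_eq_sum_deg_support hs).symm _

theorem finrank_harmonicSubmodule_add [Nonempty σ] (n : ℕ) :
    finrank K (harmonicSubmodule σ K (n + 2)) + finrank K (homogeneousSubmodule σ K n) =
      finrank K (homogeneousSubmodule σ K (n + 2)) := by
  rw [← ((laplacian σ K).domRestrict
      (homogeneousSubmodule σ K (n + 2))).finrank_range_add_finrank_ker,
    LinearMap.range_domRestrict, map_laplacian_homogeneousSubmodule, LinearMap.ker_domRestrict,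
    ← Submodule.finrank_map_subtype_eq, Submodule.map_comap_subtype, add_comm]
  rfl

end Field

end MvPolynomial

open MvPolynomial

/-- The space of degree-`k` harmonic polynomials in `d ≥ 3` variables is finite-dimensional,
of dimension `(d+2k-2)(d+k-3)!/((d-2)!·k!)`. -/
theorem dim_harmonic_polynomials (d k : ℕ) (hd : 3 ≤ d) :
    letI Hk : Submodule ℂ (MvPolynomial (Fin d) ℂ) :=
      (homogeneousSubmodule (Fin d) ℂ k) ⊓
        LinearMap.ker (∑ i : Fin d,
          ((pderiv (R := ℂ) i).toLinearMap ∘ₗ (pderiv (R := ℂ) i).toLinearMap))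
    FiniteDimensional ℂ Hk ∧
      Module.finrank ℂ Hk * (Nat.factorial (d - 2) * Nat.factorial k) =
        (d + 2 * k - 2) * Nat.factorial (d + k - 3) := by
  change FiniteDimensional ℂ (harmonicSubmodule (Fin d) ℂ k) ∧
    finrank ℂ (harmonicSubmodule (Fin d) ℂ k) * _ = _
  refine ⟨inferInstance, ?_⟩
  obtain ⟨D, rfl⟩ : ∃ D, d = D + 2 := ⟨d - 2, by omega⟩
  rcases k with _ | _ | K
  · rw [harmonicSubmodule_eq_of_lt_two (by norm_num), finrank_homogeneousSubmodule]
    simp [Nat.mul_factorial_pred (show D ≠ 0 by omega)]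
  · rw [harmonicSubmodule_eq_of_lt_two (by norm_num), finrank_homogeneousSubmodule]
    simp
  · have h := finrank_harmonicSubmodule_add (σ := Fin (D + 2)) (K := ℂ) K
    rw [finrank_homogeneousSubmodule, finrank_homogeneousSubmodule, Fintype.card_fin] at h
    have hX : finrank ℂ (harmonicSubmodule (Fin (D + 2)) ℂ (K + 2)) + (D + K + 1).choose K =
        (D + K + 3).choose (K + 2) := by
      convert h using 3 <;> omega
    convert Nat.mul_factorial_mul_factorial_of_add_choose_eq hX using 4 <;> omega
end
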